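/- arXiv:1811.08257 — 2 statements merged into one kernel-verified Lean document; each statement's English description precedes it below -/
import Mathlib

section
/- Let K ≥ 2, l ≥ 1, and real numbers x_1,…,x_K with x_t = max_k x_k. Define p_t = e^{x_t} / Σ_{k=1}^K e^{x_k} and p_t' = e^{x_t} / Σ_{k : x_k ≥ x_t − m} e^{x_k}. If m ≥ ln((10^l − 1)(K − 1)), then |p_t − p_t'| ≤ 10^{−l}. -/
/-!
Split the full sum as `A + B`, with `A` the truncated sum. Since `A ≥ e^{x_t}`, the error
`e^{x_t}/A - e^{x_t}/(A + B) = e^{x_t} B / (A (A + B))` is at most `B / (e^{x_t} + B)`. Each of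
the at most `K - 1` dropped terms is below `e^{x_t - m}`, so `B (10^l - 1) ≤ e^{x_t}`, and this is
exactly `B / (e^{x_t} + B) ≤ 10^{-l}`.
-/

open Finset

theorem abs_div_add_sub_div_le_inv {e A B q : ℝ} (he : 0 < e) (heA : e ≤ A) (hB : 0 ≤ B)
    (hBq : B * (q - 1) ≤ e) (hq : 0 < q) : |e / (A + B) - e / A| ≤ q⁻¹ := by
  have hA : 0 < A := he.trans_le heA
  rw [abs_sub_comm, abs_of_nonneg (sub_nonneg.2 <|
    div_le_div_of_nonneg_left he.le hA (le_add_of_nonneg_right hB))]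
  calc e / A - e / (A + B) = e * B / (A * (A + B)) := by field_simp; ring
    _ ≤ e * B / (e * (e + B)) := by gcongr
    _ = B / (e + B) := by field_simp
    _ ≤ q⁻¹ := by
      rw [div_le_iff₀ (by positivity), inv_mul_eq_div, le_div_iff₀ hq]
      linarith

theorem sum_exp_filter_lt_le {ι : Type*} [Fintype ι] (x : ι → ℝ) (t : ι) {m : ℝ}
    (hm : 0 ≤ m) :
    ∑ k ∈ univ.filter (fun k => x k < x t - m), Real.exp (x k)
      ≤ ((Fintype.card ι : ℝ) - 1) * Real.exp (x t - m) := by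
  have hcard : (univ.filter (fun k => x k < x t - m)).card < Fintype.card ι :=
    card_lt_univ_of_notMem (x := t) (by simp [hm])
  calc ∑ k ∈ univ.filter (fun k => x k < x t - m), Real.exp (x k)
      ≤ (univ.filter (fun k => x k < x t - m)).card • Real.exp (x t - m) :=
        sum_le_card_nsmul _ _ _ fun k hk => Real.exp_le_exp.2 (mem_filter.1 hk).2.le
    _ ≤ ((Fintype.card ι : ℝ) - 1) * Real.exp (x t - m) := by
        rw [nsmul_eq_mul]
        gcongr
        rw [le_sub_iff_add_le]
        exact_mod_cast hcard

theorem abs_softmax_sub_truncated_le {ι : Type*} [Fintype ι] (x : ι → ℝ) (t : ι) {m q : ℝ}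
    (hm : 0 ≤ m) (hq : 1 < q) (hmq : (q - 1) * ((Fintype.card ι : ℝ) - 1) ≤ Real.exp m) :
    |Real.exp (x t) / ∑ k, Real.exp (x k) -
      Real.exp (x t) / ∑ k ∈ univ.filter (fun k => x t - m ≤ x k), Real.exp (x k)| ≤ q⁻¹ := by
  set A := ∑ k ∈ univ.filter (fun k => x t - m ≤ x k), Real.exp (x k)
  set B := ∑ k ∈ univ.filter (fun k => x k < x t - m), Real.exp (x k)
  have hsum : ∑ k, Real.exp (x k) = A + B := by
    simp_rw [A, B, ← not_le]
    exact (sum_filter_add_sum_filter_not _ _ _).symm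
  have heA : Real.exp (x t) ≤ A :=
    single_le_sum (fun k _ => (Real.exp_pos _).le) (by simp [hm])
  have hB : 0 ≤ B := sum_nonneg fun k _ => (Real.exp_pos _).le
  have hBq : B * (q - 1) ≤ Real.exp (x t) := calc
    B * (q - 1) ≤ ((Fintype.card ι : ℝ) - 1) * Real.exp (x t - m) * (q - 1) :=
      mul_le_mul_of_nonneg_right (sum_exp_filter_lt_le x t hm) (by linarith)
    _ = (q - 1) * ((Fintype.card ι : ℝ) - 1) * Real.exp (x t) / Real.exp m := by
      rw [Real.exp_sub]; ring
    _ ≤ Real.exp m * Real.exp (x t) / Real.exp m := by gcongr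
    _ = Real.exp (x t) := by field_simp
  rw [hsum]
  exact abs_div_add_sub_div_le_inv (Real.exp_pos _) heA hB hBq (by linarith)

theorem softmax_truncation_general (K l : ℕ) (hK : 2 ≤ K) (hl : 1 ≤ l)
    (x : Fin K → ℝ) (t : Fin K)
    (m : ℝ) (hm : Real.log (((10 : ℝ) ^ l - 1) * ((K : ℝ) - 1)) ≤ m) :
    |Real.exp (x t) / ∑ k, Real.exp (x k) -
      Real.exp (x t) / ∑ k ∈ Finset.univ.filter (fun k => x t - m ≤ x k), Real.exp (x k)|
      ≤ (10 : ℝ) ^ (-(l : ℤ)) := by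
  have hq : (10 : ℝ) ≤ 10 ^ l := le_self_pow₀ (by norm_num) (by omega)
  have hK1 : (1 : ℝ) ≤ (K : ℝ) - 1 := by
    have : (2 : ℝ) ≤ K := by exact_mod_cast hK
    linarith
  have hP : 1 ≤ ((10 : ℝ) ^ l - 1) * ((K : ℝ) - 1) := by nlinarith
  rw [zpow_neg, zpow_natCast]
  refine abs_softmax_sub_truncated_le x t ((Real.log_nonneg hP).trans hm) (by linarith) ?_
  rw [Fintype.card_fin]
  exact (Real.log_le_iff_le_exp (by linarith)).1 hm

theorem softmax_truncation (K l : ℕ) (hK : 2 ≤ K) (hl : 1 ≤ l)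
    (x : Fin K → ℝ) (t : Fin K) (ht : ∀ k, x k ≤ x t)
    (m : ℝ) (hm : Real.log (((10 : ℝ) ^ l - 1) * ((K : ℝ) - 1)) ≤ m) :
    |Real.exp (x t) / ∑ k, Real.exp (x k) -
      Real.exp (x t) / ∑ k ∈ Finset.univ.filter (fun k => x t - m ≤ x k), Real.exp (x k)|
      ≤ (10 : ℝ) ^ (-(l : ℤ)) :=
  softmax_truncation_general K l hK hl x t m hm
end

section
/- Let l ≥ 1, s_1 ≥ 0, s_2 ≥ 1 be reals with s_1 + s_2 = K − 1 for some K ≥ 2. The expression ln( sqrt( ((10^l − 1)²·s_2 − 4·10^l·s_1)·s_2 / 4 ) + ((10^l − 1)·s_2 − 2·s_1)/2 ), viewed as a function of (s_1, s_2) subject to s_1 + s_2 = K − 1, s_1 ≥ 0, is maximized at s_1 = 0, s_2 = K − 1, where its value equals ln((10^l − 1)(K − 1)). -/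
/-! The argument of the logarithm is `√((a²s₂ - 4bs₁)s₂/4) + (as₂ - 2s₁)/2` with `b = 10^l`,
`a = b - 1`. Dropping the nonnegative term `bs₁s₂` from the radicand bounds the root by `as₂/2`,
so the argument is at most `as₂ - s₁ ≤ a(s₁ + s₂)`, with equality when `s₁ = 0`. It is positive
because a nonnegative radicand forces `4bs₁ ≤ a²s₂`, whence `2b(as₂ - 2s₁) ≥ a(b + 1)s₂ > 0`;
monotonicity of `log` concludes. -/

open Real

noncomputable def mBoundArg (b s1 s2 : ℝ) : ℝ :=
  √((((b - 1) ^ 2 * s2 - 4 * b * s1) * s2) / 4) + ((b - 1) * s2 - 2 * s1) / 2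

section

variable {b s1 s2 : ℝ}

theorem mBoundArg_le (hb : 1 ≤ b) (hs1 : 0 ≤ s1) (hs2 : 0 ≤ s2) :
    mBoundArg b s1 s2 ≤ (b - 1) * (s1 + s2) := by
  have hroot : √((((b - 1) ^ 2 * s2 - 4 * b * s1) * s2) / 4) ≤ (b - 1) * s2 / 2 := by
    refine Real.sqrt_le_iff.mpr ⟨by positivity, ?_⟩
    nlinarith [mul_nonneg (mul_nonneg (by linarith : (0 : ℝ) ≤ b) hs1) hs2]
  unfold mBoundArg
  nlinarith

theorem mBoundArg_pos (hb : 1 < b) (hs2 : 0 < s2)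
    (hrad : 0 ≤ (((b - 1) ^ 2 * s2 - 4 * b * s1) * s2) / 4) :
    0 < mBoundArg b s1 s2 := by
  have hdisc : 4 * b * s1 ≤ (b - 1) ^ 2 * s2 := by
    have : 0 ≤ (b - 1) ^ 2 * s2 - 4 * b * s1 := by
      apply nonneg_of_mul_nonneg_left _ hs2
      linarith
    linarith
  have hlin : 0 < (b - 1) * s2 - 2 * s1 := by
    have : 0 < 2 * b * ((b - 1) * s2 - 2 * s1) := by
      nlinarith [mul_pos (mul_pos (sub_pos.mpr hb) (by linarith : (0 : ℝ) < b + 1)) hs2]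
    exact pos_of_mul_pos_right this (by linarith)
  unfold mBoundArg
  positivity

theorem mBoundArg_zero_left (hb : 1 ≤ b) (hs2 : 0 ≤ s2) :
    mBoundArg b 0 s2 = (b - 1) * s2 := by
  have hsq : (((b - 1) ^ 2 * s2 - 4 * b * 0) * s2) / 4 = ((b - 1) * s2 / 2) ^ 2 := by ring
  rw [mBoundArg, hsq, Real.sqrt_sq (by nlinarith)]
  ring

end

theorem m_bound_maximized_general (l : ℝ) (hl : 1 ≤ l) (K : ℕ)
    (s1 s2 : ℝ) (hs1 : 0 ≤ s1) (hs2 : 1 ≤ s2) (hsum : s1 + s2 = (K : ℝ) - 1)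
    (hsqrt : 0 ≤ ((((10 : ℝ) ^ l - 1) ^ 2 * s2 - 4 * (10 : ℝ) ^ l * s1) * s2) / 4) :
    Real.log (Real.sqrt (((((10 : ℝ) ^ l - 1) ^ 2 * s2 - 4 * (10 : ℝ) ^ l * s1) * s2) / 4) +
        (((10 : ℝ) ^ l - 1) * s2 - 2 * s1) / 2) ≤
      Real.log (((10 : ℝ) ^ l - 1) * ((K : ℝ) - 1)) ∧
    Real.log (Real.sqrt (((((10 : ℝ) ^ l - 1) ^ 2 * ((K : ℝ) - 1) - 4 * (10 : ℝ) ^ l * 0) *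
          ((K : ℝ) - 1)) / 4) +
        (((10 : ℝ) ^ l - 1) * ((K : ℝ) - 1) - 2 * 0) / 2) =
      Real.log (((10 : ℝ) ^ l - 1) * ((K : ℝ) - 1)) := by
  have hb : 1 < (10 : ℝ) ^ l := Real.one_lt_rpow (by norm_num) (by linarith)
  constructor
  · change log (mBoundArg _ s1 s2) ≤ _
    rw [← hsum]
    exact log_le_log (mBoundArg_pos hb (by linarith) hsqrt) (mBoundArg_le hb.le hs1 (by linarith))
  · change log (mBoundArg _ 0 _) = _
    rw [mBoundArg_zero_left hb.le (by linarith)]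

theorem m_bound_maximized (l : ℝ) (hl : 1 ≤ l) (K : ℕ) (hK : 2 ≤ K)
    (s1 s2 : ℝ) (hs1 : 0 ≤ s1) (hs2 : 1 ≤ s2) (hsum : s1 + s2 = (K : ℝ) - 1)
    (hsqrt : 0 ≤ ((((10 : ℝ) ^ l - 1) ^ 2 * s2 - 4 * (10 : ℝ) ^ l * s1) * s2) / 4) :
    Real.log (Real.sqrt (((((10 : ℝ) ^ l - 1) ^ 2 * s2 - 4 * (10 : ℝ) ^ l * s1) * s2) / 4) +
        (((10 : ℝ) ^ l - 1) * s2 - 2 * s1) / 2) ≤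
      Real.log (((10 : ℝ) ^ l - 1) * ((K : ℝ) - 1)) ∧
    Real.log (Real.sqrt (((((10 : ℝ) ^ l - 1) ^ 2 * ((K : ℝ) - 1) - 4 * (10 : ℝ) ^ l * 0) *
          ((K : ℝ) - 1)) / 4) +
        (((10 : ℝ) ^ l - 1) * ((K : ℝ) - 1) - 2 * 0) / 2) =
      Real.log (((10 : ℝ) ^ l - 1) * ((K : ℝ) - 1)) :=
  m_bound_maximized_general l hl K s1 s2 hs1 hs2 hsum hsqrt
end
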